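/- Let R be a principal ideal domain, let B be a finitely generated R-module, let M be an R-module, and let φ : B → M be an R-linear map whose restriction to the torsion submodule of B is surjective onto M. Then there exists a submodule F of B such that F is a free R-module, B is the internal direct sum of F and the torsion submodule of B (that is, F ∩ tor(B) = 0 and F + tor(B) = B), and φ vanishes on F. -/
import Mathlib


/-- Over a PID `R`, if `B` is a finitely generated `R`-module, `M` an
`R`-module, and `φ : B →ₗ[R] M` restricts to a surjection from the torsion submodule
of `B` onto `M`, then there is a free submodule `F` of `B` which is a complement to
the torsion submodule (so `B = F ⊕ tor(B)` internally) and on which `φ` vanishes. -/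
theorem stmt4 {R : Type} [CommRing R] [IsDomain R] [IsPrincipalIdealRing R]
    {B M : Type} [AddCommGroup B] [Module R B] [Module.Finite R B]
    [AddCommGroup M] [Module R M]
    (φ : B →ₗ[R] M)
    (hsurj : ∀ m : M, ∃ b ∈ Submodule.torsion R B, φ b = m) :
    ∃ F : Submodule R B, Module.Free R F ∧ IsCompl F (Submodule.torsion R B) ∧
      ∀ x ∈ F, φ x = 0 := by
  set T := Submodule.torsion R B with hT
  haveI : Module.Finite R (B ⧸ T) := Module.Finite.of_surjective _ T.mkQ_surjective
  obtain ⟨n, ⟨g⟩⟩ := @Module.basisOfFiniteTypeTorsionFree' R _ (B ⧸ T) _ _ _ _ _ _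
  haveI : Module.Projective R (B ⧸ T) := Module.Projective.of_basis ⟨g⟩
  obtain ⟨s, hs⟩ := Module.projective_lifting_property T.mkQ LinearMap.id T.mkQ_surjective
  have hφT : Function.Surjective (φ ∘ₗ T.subtype) := by
    intro m
    obtain ⟨b, hb, hφ⟩ := hsurj m
    exact ⟨⟨b, hb⟩, hφ⟩
  obtain ⟨ψ, hψ⟩ := Module.projective_lifting_property (φ ∘ₗ T.subtype) (φ ∘ₗ s) hφT
  set f : (B ⧸ T) →ₗ[R] B := s - T.subtype ∘ₗ ψ with hf
  have hmkf : ∀ y, T.mkQ (f y) = y := by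
    intro y
    have h1 : T.mkQ (s y) = y := congrFun (congrArg DFunLike.coe hs) y
    have h2 : T.mkQ (ψ y : B) = 0 := (Submodule.Quotient.mk_eq_zero T).mpr (ψ y).2
    rw [hf]
    simp only [LinearMap.sub_apply, map_sub, LinearMap.comp_apply, Submodule.subtype_apply, h1, h2, sub_zero]
  have hinj : Function.Injective f := by
    intro a b hab
    have := hmkf a
    rw [hab, hmkf b] at this
    exact this.symm
  refine ⟨LinearMap.range f, ?_, ?_, ?_⟩
  · haveI : Module.Free R (B ⧸ T) := Module.Free.of_equiv g.symm
    exact Module.Free.of_equiv (LinearEquiv.ofInjective f hinj)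
  · constructor
    · rw [Submodule.disjoint_def]
      rintro x ⟨y, rfl⟩ hxT
      have : T.mkQ (f y) = 0 := (Submodule.Quotient.mk_eq_zero T).mpr hxT
      rw [hmkf] at this
      rw [this, map_zero]
    · rw [codisjoint_iff, eq_top_iff]
      intro b _
      have hb : b - f (T.mkQ b) ∈ T := by
        rw [← Submodule.Quotient.mk_eq_zero T]
        have : T.mkQ (b - f (T.mkQ b)) = 0 := by
          rw [map_sub, hmkf, sub_self]
        simpa [Submodule.mkQ_apply] using this
      have : b = f (T.mkQ b) + (b - f (T.mkQ b)) := by abel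
      rw [this]
      exact Submodule.add_mem_sup (LinearMap.mem_range_self f _) hb
  · rintro x ⟨y, rfl⟩
    have h1 : φ (s y) = (φ ∘ₗ T.subtype) (ψ y) := by
      have := congrFun (congrArg DFunLike.coe hψ) y
      exact this.symm
    simp [hf, h1]
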